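/- arXiv:1604.03172 — 10 statements merged into one kernel-verified Lean document; each statement's English description precedes it below -/
import Mathlib

section
/- The core subsemigroup S_c is left reversible: for all s, t ∈ S_c, the intersection sS_c ∩ tS_c is nonempty. -/
/-- Principal right ideal `sS` in a monoid. -/
def rIdeal {S : Type*} [Monoid S] (s : S) : Set S := {x | ∃ y, x = s * y}

/-- The core subsemigroup `S_c`. -/
def core (S : Type*) [Monoid S] : Set S :=
  {s | ∀ t : S, (rIdeal s ∩ rIdeal t).Nonempty}

theorem core_left_reversible {S : Type*} [Monoid S]
    (hcanc : ∀ a b c : S, a * b = a * c → b = c)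
    (hLCM : ∀ s t : S, (rIdeal s ∩ rIdeal t).Nonempty →
      ∃ r : S, rIdeal s ∩ rIdeal t = rIdeal r)
    (s t : S) (hs : s ∈ core S) (ht : t ∈ core S) :
    ∃ a ∈ core S, ∃ b ∈ core S, s * a = t * b := by
  obtain ⟨r, hr⟩ := hLCM s t (hs t)
  have hrr : r ∈ rIdeal s ∩ rIdeal t := by
    rw [hr]; exact ⟨1, (mul_one r).symm⟩
  obtain ⟨⟨a, ha⟩, ⟨b, hb⟩⟩ := hrr
  -- r is in the core
  have hrc : r ∈ core S := by
    intro u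
    obtain ⟨w, hw⟩ := hLCM s u (hs u)
    obtain ⟨x, hxt, hxw⟩ := ht w
    have hxsu : x ∈ rIdeal s ∩ rIdeal u := by rw [hw]; exact hxw
    exact ⟨x, by rw [← hr]; exact ⟨hxsu.1, hxt⟩, hxsu.2⟩
  -- a is in the core
  have hac : ∀ (s : S) (a : S), r = s * a → a ∈ core S := by
    intro s a ha u
    obtain ⟨x, ⟨y, hy⟩, ⟨z, hz⟩⟩ := hrc (s * u)
    have : s * (a * y) = s * (u * z) := by
      rw [← mul_assoc, ← ha, ← hy, hz, mul_assoc]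
    have h := hcanc s _ _ this
    exact ⟨a * y, ⟨y, rfl⟩, ⟨z, h⟩⟩
  exact ⟨a, hac s a ha, b, hac t b hb, by rw [← ha, ← hb]⟩
end

section
/- If s, t ∈ S_c and sS ∩ tS = rS, then r ∈ S_c. -/
theorem lcm_of_core_mem_core {S : Type*} [Monoid S]
    (hcanc : ∀ a b c : S, a * b = a * c → b = c)
    (hLCM : ∀ s t : S, (rIdeal s ∩ rIdeal t).Nonempty →
      ∃ r : S, rIdeal s ∩ rIdeal t = rIdeal r)
    (s t r : S) (hs : s ∈ core S) (ht : t ∈ core S)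
    (hr : rIdeal s ∩ rIdeal t = rIdeal r) : r ∈ core S := by
  intro u
  obtain ⟨v, hv⟩ := hLCM s u (hs u)
  obtain ⟨z, hzt, hzv⟩ := ht v
  obtain ⟨d, hd⟩ := hzv
  have hvmem : v ∈ rIdeal s ∩ rIdeal u := by
    rw [hv]; exact ⟨1, (mul_one v).symm⟩
  obtain ⟨⟨a, ha⟩, ⟨b, hb⟩⟩ := hvmem
  have hzr : z ∈ rIdeal r := by
    rw [← hr]
    exact ⟨⟨a * d, by rw [hd, ha, mul_assoc]⟩, hzt⟩
  exact ⟨z, hzr, ⟨b * d, by rw [hd, hb, mul_assoc]⟩⟩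
end

section
/- For finite subsets F₁, F₂ of S, the product set F₁·F₂ := {st | s ∈ F₁, t ∈ F₂} is a foundation set whenever F₁ and F₂ are foundation sets. -/
/-- A finite subset is a foundation set if every principal right ideal
intersects some `fS` with `f ∈ F`. -/
def IsFoundationSet {S : Type*} [Monoid S] (F : Finset S) : Prop :=
  ∀ t : S, ∃ f ∈ F, (rIdeal f ∩ rIdeal t).Nonempty

theorem foundation_mul {S : Type*} [Monoid S] [DecidableEq S]
    (hcanc : ∀ a b c : S, a * b = a * c → b = c)
    (hLCM : ∀ s t : S, (rIdeal s ∩ rIdeal t).Nonempty →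
      ∃ r : S, rIdeal s ∩ rIdeal t = rIdeal r)
    (F₁ F₂ : Finset S) (h₁ : IsFoundationSet F₁) (h₂ : IsFoundationSet F₂) :
    IsFoundationSet (Finset.image₂ (· * ·) F₁ F₂) := by
  intro t
  obtain ⟨f₁, hf₁, x, ⟨a, ha⟩, b, hb⟩ := h₁ t
  obtain ⟨f₂, hf₂, y, ⟨u, hu⟩, v, hv⟩ := h₂ a
  refine ⟨f₁ * f₂, Finset.mem_image₂_of_mem hf₁ hf₂, f₁ * f₂ * u, ⟨u, rfl⟩, b * v, ?_⟩
  calc f₁ * f₂ * u = f₁ * (f₂ * u) := mul_assoc _ _ _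
    _ = f₁ * (a * v) := by rw [← hu, hv]
    _ = f₁ * a * v := (mul_assoc _ _ _).symm
    _ = t * b * v := by rw [← ha, hb]
    _ = t * (b * v) := mul_assoc _ _ _
end

section
/- If s ∈ S_c and F is an accurate foundation set, then both s·F = {sf | f ∈ F} and F·s = {fs | f ∈ F} are accurate foundation sets. -/
def IsAccurate {S : Type*} [Monoid S] (F : Finset S) : Prop :=
  ∀ f ∈ F, ∀ f' ∈ F, f ≠ f' → rIdeal f ∩ rIdeal f' = ∅

theorem core_smul_accurate_foundation {S : Type*} [Monoid S] [DecidableEq S]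
    (hcanc : ∀ a b c : S, a * b = a * c → b = c)
    (hLCM : ∀ s t : S, (rIdeal s ∩ rIdeal t).Nonempty →
      ∃ r : S, rIdeal s ∩ rIdeal t = rIdeal r)
    (s : S) (hs : s ∈ core S) (F : Finset S)
    (hF : IsFoundationSet F) (hFa : IsAccurate F) :
    (IsFoundationSet (F.image (fun f => s * f)) ∧
      IsAccurate (F.image (fun f => s * f))) ∧
    (IsFoundationSet (F.image (fun f => f * s)) ∧
      IsAccurate (F.image (fun f => f * s))) := by
  refine ⟨⟨?_, ?_⟩, ?_, ?_⟩
  · -- left foundation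
    intro t
    obtain ⟨x, ⟨a, hxa⟩, ⟨b, hxb⟩⟩ := hs t
    obtain ⟨f, hf, y, ⟨u, hyu⟩, ⟨v, hyv⟩⟩ := hF a
    refine ⟨s * f, Finset.mem_image_of_mem _ hf, s * f * u, ⟨u, rfl⟩, b * v, ?_⟩
    calc s * f * u = s * (f * u) := by rw [mul_assoc]
      _ = s * (a * v) := by rw [← hyu, hyv]
      _ = (s * a) * v := by rw [mul_assoc]
      _ = (t * b) * v := by rw [← hxa, hxb]
      _ = t * (b * v) := by rw [mul_assoc]
  · -- left accuracy
    intro g hg g' hg' hne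
    obtain ⟨f, hf, rfl⟩ := Finset.mem_image.mp hg
    obtain ⟨f', hf', rfl⟩ := Finset.mem_image.mp hg'
    have hff' : f ≠ f' := fun h => hne (by rw [h])
    rw [Set.eq_empty_iff_forall_notMem]
    rintro x ⟨⟨u, hu⟩, ⟨v, hv⟩⟩
    have : f * u = f' * v := hcanc s _ _ (by rw [← mul_assoc, ← mul_assoc, ← hu, ← hv])
    have h2 := hFa f hf f' hf' hff'
    have : f * u ∈ rIdeal f ∩ rIdeal f' := ⟨⟨u, rfl⟩, ⟨v, this⟩⟩
    rw [h2] at this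
    exact this
  · -- right foundation
    intro t
    obtain ⟨f, hf, x, ⟨a, hxa⟩, ⟨b, hxb⟩⟩ := hF t
    obtain ⟨y, ⟨c, hyc⟩, ⟨d, hyd⟩⟩ := hs a
    refine ⟨f * s, Finset.mem_image_of_mem _ hf, f * s * c, ⟨c, rfl⟩, b * d, ?_⟩
    calc f * s * c = f * (s * c) := by rw [mul_assoc]
      _ = f * (a * d) := by rw [← hyc, hyd]
      _ = (f * a) * d := by rw [mul_assoc]
      _ = (t * b) * d := by rw [← hxa, hxb]
      _ = t * (b * d) := by rw [mul_assoc]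
  · -- right accuracy
    intro g hg g' hg' hne
    obtain ⟨f, hf, rfl⟩ := Finset.mem_image.mp hg
    obtain ⟨f', hf', rfl⟩ := Finset.mem_image.mp hg'
    have hff' : f ≠ f' := fun h => hne (by rw [h])
    rw [Set.eq_empty_iff_forall_notMem]
    rintro x ⟨⟨u, hu⟩, ⟨v, hv⟩⟩
    have h2 := hFa f hf f' hf' hff'
    have hx : x ∈ rIdeal f ∩ rIdeal f' :=
      ⟨⟨s * u, by rw [← mul_assoc]; exact hu⟩, ⟨s * v, by rw [← mul_assoc]; exact hv⟩⟩
    rw [h2] at hx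
    exact hx
end

section
/- If the relation s → t :⟺ s ∈ t(S_c \ S*) on S is terminating (there is no infinite sequence (sₙ) with sₙ → sₙ₊₁ and sₙ ≠ sₙ₊₁ for all n), then every element of S can be written as s = t·r with t ∈ S_ci ∪ {1} and r ∈ S_c. -/
def coreIrred (S : Type*) [Monoid S] : Set S :=
  {s | s ∉ core S ∧ ∀ t r : S, s = t * r → r ∈ core S → IsUnit r}

/-- The relation `s → t` iff `s ∈ t(S_c \ S*)`. -/
def coreRel {S : Type*} [Monoid S] (s t : S) : Prop :=
  ∃ c : S, c ∈ core S ∧ ¬ IsUnit c ∧ s = t * c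

lemma one_mem_core {S : Type*} [Monoid S] : (1 : S) ∈ core S := by
  intro t
  exact ⟨t, ⟨t, (one_mul t).symm⟩, ⟨1, (mul_one t).symm⟩⟩

lemma mul_mem_core {S : Type*} [Monoid S] {a b : S} (ha : a ∈ core S) (hb : b ∈ core S) :
    a * b ∈ core S := by
  intro t
  obtain ⟨z, ⟨x, hx⟩, ⟨y, hy⟩⟩ := ha t
  obtain ⟨w, ⟨u, hu⟩, ⟨v, hv⟩⟩ := hb x
  refine ⟨a * b * u, ⟨u, rfl⟩, ⟨y * v, ?_⟩⟩
  calc a * b * u = a * (b * u) := by rw [mul_assoc]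
    _ = a * (x * v) := by rw [← hu, hv]
    _ = (a * x) * v := by rw [mul_assoc]
    _ = (t * y) * v := by rw [← hx, hy]
    _ = t * (y * v) := by rw [mul_assoc]

theorem factor_coreIrred_core_of_terminating {S : Type*} [Monoid S]
    (hcanc : ∀ a b c : S, a * b = a * c → b = c)
    (hLCM : ∀ s t : S, (rIdeal s ∩ rIdeal t).Nonempty →
      ∃ r : S, rIdeal s ∩ rIdeal t = rIdeal r)
    (hterm : ¬ ∃ f : ℕ → S, ∀ n : ℕ, coreRel (f n) (f (n + 1)) ∧ f n ≠ f (n + 1)) :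
    ∀ s : S, ∃ t r : S, (t ∈ coreIrred S ∨ t = 1) ∧ r ∈ core S ∧ s = t * r := by
  set R : S → S → Prop := fun b a => coreRel a b ∧ a ≠ b with hR
  have hwf : WellFounded R := by
    by_contra hnw
    have hex : ∃ a, ¬ Acc R a := by
      by_contra h; push_neg at h; exact hnw ⟨h⟩
    have step : ∀ a : {a : S // ¬ Acc R a}, ∃ b : {a : S // ¬ Acc R a}, R b.1 a.1 := by
      rintro ⟨a, ha⟩
      by_contra h; push_neg at h
      refine ha (Acc.intro a fun b hb => ?_)
      by_contra hb'
      exact h ⟨b, hb'⟩ hb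
    choose g hg using step
    obtain ⟨a0, ha0⟩ := hex
    set f : ℕ → {a : S // ¬ Acc R a} := fun n => g^[n] ⟨a0, ha0⟩ with hf
    refine hterm ⟨fun n => (f n).1, fun n => ?_⟩
    have hstep : f (n + 1) = g (f n) := Function.iterate_succ_apply' g n _
    have := hg (f n)
    rw [← hstep] at this
    exact ⟨this.1, this.2⟩
  intro s
  induction s using hwf.induction with
  | _ s IH =>
    by_cases hs : s ∈ core S
    · exact ⟨1, s, Or.inr rfl, hs, (one_mul s).symm⟩
    by_cases hirr : ∀ t r : S, s = t * r → r ∈ core S → IsUnit r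
    · exact ⟨s, 1, Or.inl ⟨hs, hirr⟩, one_mem_core, (mul_one s).symm⟩
    push_neg at hirr
    obtain ⟨t, r, hst, hrc, hru⟩ := hirr
    have hne : s ≠ t := by
      rintro rfl
      have : (1 : S) = r := hcanc s 1 r (by rw [mul_one]; exact hst)
      exact hru (this ▸ isUnit_one)
    obtain ⟨t', r', ht', hr'c, ht'r'⟩ := IH t ⟨⟨r, hrc, hru, hst⟩, hne⟩
    exact ⟨t', r' * r, ht', mul_mem_core hr'c hrc, by rw [hst, ht'r', mul_assoc]⟩
end

section
/- In the monoid S = ℕ ⋊ ℕ^× with multiplication (m,p)(n,q) = (m + pn, pq), the core subsemigroup equals ℕ × {1}: an element (m,p) satisfies (m,p)S ∩ (n,q)S ≠ ∅ for all (n,q) ∈ S if and only if p = 1. -/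
/-- Multiplication of the semidirect product `ℕ ⋊ ℕ^×`: `(m,p)(n,q) = (m + pn, pq)`. -/
def nMul (a b : ℕ × ℕ+) : ℕ × ℕ+ := (a.1 + (a.2 : ℕ) * b.1, a.2 * b.2)

/-- The principal right ideal `(m,p)S`. -/
def nIdeal (a : ℕ × ℕ+) : Set (ℕ × ℕ+) := {x | ∃ y, x = nMul a y}

theorem core_of_N_rtimes_Nx (m : ℕ) (p : ℕ+) :
    (∀ t : ℕ × ℕ+, (nIdeal (m, p) ∩ nIdeal t).Nonempty) ↔ p = 1 := by
  constructor
  · intro h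
    obtain ⟨x, ⟨⟨k, r⟩, hx1⟩, ⟨l, s⟩, hx2⟩ := h (m + 1, p)
    rw [hx1] at hx2
    simp only [nMul, Prod.mk.injEq] at hx2
    have h1 : m + (p : ℕ) * k = m + 1 + (p : ℕ) * l := hx2.1
    have hd : (p : ℕ) ∣ 1 := by
      have hk : (p : ℕ) * l < (p : ℕ) * k := by omega
      have : l < k := lt_of_mul_lt_mul_left hk (Nat.zero_le _)
      refine ⟨k - l, ?_⟩
      have := Nat.mul_sub (p : ℕ) k l
      omega
    have : (p : ℕ) = 1 := Nat.eq_one_of_dvd_one hd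
    exact PNat.coe_injective this
  · rintro rfl ⟨n, q⟩
    have hq : m ≤ (q:ℕ) * m := Nat.le_mul_of_pos_left m q.pos
    refine ⟨(n + (q:ℕ) * m, q), ⟨(n + (q:ℕ) * m - m, q), ?_⟩, ⟨m, 1⟩, ?_⟩ <;>
      simp [nMul] <;> omega
end

section
/- In S = ℕ ⋊ ℕ^×, two principal right ideals intersect nontrivially exactly when the translation parts are congruent modulo the gcd of the scaling parts: (m,p)S ∩ (n,q)S ≠ ∅ if and only if m ≡ n (mod gcd(p,q)). -/
theorem ideals_intersect_iff_mod_gcd (m n : ℕ) (p q : ℕ+) :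
    (nIdeal (m, p) ∩ nIdeal (n, q)).Nonempty ↔
      m ≡ n [MOD Nat.gcd (p : ℕ) (q : ℕ)] := by
  constructor
  · rintro ⟨x, ⟨y1, h1⟩, ⟨y2, h2⟩⟩
    have hfst : m + (p : ℕ) * y1.1 = n + (q : ℕ) * y2.1 := by
      have := congrArg Prod.fst (h1.symm.trans h2)
      simpa [nMul] using this
    have hd : ((Nat.gcd (p : ℕ) (q : ℕ) : ℤ)) ∣ (n : ℤ) - m := by
      have : (n : ℤ) - m = (p : ℕ) * y1.1 - (q : ℕ) * y2.1 := by
        have := congrArg (fun k : ℕ => (k : ℤ)) hfst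
        push_cast at this
        linarith
      rw [this]
      exact dvd_sub (Dvd.dvd.mul_right (by exact_mod_cast Int.natCast_dvd_natCast.mpr (Nat.gcd_dvd_left _ _)) _)
        (Dvd.dvd.mul_right (by exact_mod_cast Int.natCast_dvd_natCast.mpr (Nat.gcd_dvd_right _ _)) _)
    exact (Nat.modEq_iff_dvd).mpr hd
  · intro h
    set g := Nat.gcd (p : ℕ) (q : ℕ) with hg
    obtain ⟨k, hk⟩ := (Nat.modEq_iff_dvd).mp h
    -- hk : (n:ℤ) - m = g * k
    set A : ℤ := Nat.gcdA (p : ℕ) (q : ℕ)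
    have hbez : (g : ℤ) = (p : ℕ) * Nat.gcdA (p : ℕ) (q : ℕ) + (q : ℕ) * Nat.gcdB (p : ℕ) (q : ℕ) :=
      Nat.gcd_eq_gcd_ab _ _
    set a' : ℤ := Nat.gcdA (p : ℕ) (q : ℕ) * k
    set b' : ℤ := -(Nat.gcdB (p : ℕ) (q : ℕ) * k)
    have key : (p : ℤ) * a' - (q : ℤ) * b' = (n : ℤ) - m := by
      have : (n : ℤ) - m = (g : ℤ) * k := hk
      rw [this, hbez]
      push_cast
      ring
    set N : ℕ := a'.natAbs + b'.natAbs
    set a : ℤ := a' + (q : ℕ) * N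
    set b : ℤ := b' + (p : ℕ) * N
    have hp1 : (1 : ℤ) ≤ (p : ℕ) := by exact_mod_cast p.one_le
    have hq1 : (1 : ℤ) ≤ (q : ℕ) := by exact_mod_cast q.one_le
    have hNa : (a'.natAbs : ℤ) ≤ N := by simp [N]
    have hNb : (b'.natAbs : ℤ) ≤ N := by simp [N]
    have ha : 0 ≤ a := by
      have h1 : -a' ≤ (a'.natAbs : ℤ) := neg_le_abs a' |>.trans_eq (Int.abs_eq_natAbs a')
      have h2 : (N : ℤ) ≤ (q : ℕ) * N := le_mul_of_one_le_left (by positivity) hq1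
      simp only [a]; linarith
    have hb : 0 ≤ b := by
      have h1 : -b' ≤ (b'.natAbs : ℤ) := neg_le_abs b' |>.trans_eq (Int.abs_eq_natAbs b')
      have h2 : (N : ℤ) ≤ (p : ℕ) * N := le_mul_of_one_le_left (by positivity) hp1
      simp only [b]; linarith
    have key2 : (m : ℤ) + (p : ℤ) * a = (n : ℤ) + (q : ℤ) * b := by
      simp only [a, b]; push_cast; linarith
    obtain ⟨aN, haN⟩ := Int.eq_ofNat_of_zero_le ha
    obtain ⟨bN, hbN⟩ := Int.eq_ofNat_of_zero_le hb
    have keyN : m + (p : ℕ) * aN = n + (q : ℕ) * bN := by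
      have : (m : ℤ) + (p : ℕ) * aN = (n : ℤ) + (q : ℕ) * bN := by
        rw [← haN, ← hbN]; exact_mod_cast key2
      exact_mod_cast this
    refine ⟨(m + (p : ℕ) * aN, p * q), ⟨(aN, q), rfl⟩, ⟨(bN, p), ?_⟩⟩
    simp [nMul, keyN, mul_comm p q]
end

section
/- In S = ℕ ⋊ ℕ^×, for every p ∈ ℕ with p ≥ 2, the set F = {(n,p) | 0 ≤ n ≤ p−1} is an accurate foundation set: the right ideals (n,p)S for 0 ≤ n ≤ p−1 are pairwise disjoint, and every principal right ideal of S intersects at least one of them. -/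
theorem elementary_accurate_foundation (p : ℕ+) (hp : 2 ≤ (p : ℕ)) :
    (∀ n n' : ℕ, n ≤ (p : ℕ) - 1 → n' ≤ (p : ℕ) - 1 → n ≠ n' →
      nIdeal (n, p) ∩ nIdeal (n', p) = ∅) ∧
    (∀ t : ℕ × ℕ+, ∃ n : ℕ, n ≤ (p : ℕ) - 1 ∧
      (nIdeal (n, p) ∩ nIdeal t).Nonempty) := by
  have hp0 : 0 < (p : ℕ) := lt_of_lt_of_le two_pos hp
  constructor
  · intro n n' hn hn' hne
    ext x
    simp only [Set.mem_inter_iff, Set.mem_empty_iff_false, iff_false]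
    rintro ⟨⟨y, hy⟩, ⟨y', hy'⟩⟩
    rw [hy] at hy'
    have h1 : n + (p : ℕ) * y.1 = n' + (p : ℕ) * y'.1 := congrArg Prod.fst hy'
    apply hne
    have hnp : n < (p : ℕ) := lt_of_le_of_lt hn (Nat.sub_lt hp0 one_pos)
    have hn'p : n' < (p : ℕ) := lt_of_le_of_lt hn' (Nat.sub_lt hp0 one_pos)
    have := congrArg (· % (p : ℕ)) h1
    simpa [Nat.add_mul_mod_self_left, Nat.mod_eq_of_lt hnp, Nat.mod_eq_of_lt hn'p] using this
  · intro t
    obtain ⟨m, q⟩ := t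
    refine ⟨m % (p : ℕ), Nat.le_sub_one_of_lt (Nat.mod_lt _ hp0), ⟨(m, q * p), ?_, ?_⟩⟩
    · exact ⟨(m / (p : ℕ), q), by simp [nMul, Nat.mod_add_div, mul_comm]⟩
    · exact ⟨(0, p), by simp [nMul]⟩
end

section
/- For positive integers c, d ≥ 2, the intersection over all n ∈ ℕ of the sets (d/c)^n · ℕ := {(d/c)^n · m | m ∈ ℕ} ⊆ ℚ equals {0} if and only if d does not divide c. -/
/-!
Taking `n = 0` shows that every element of the intersection is a natural number `a`, and `a`
lies in the `n`-th set iff `d ^ n ∣ a * c ^ n`. If `d ∣ c` this holds for `a = 1`; conversely,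
for `a ≠ 0`, comparing `p`-adic valuations, `n * v_p(d) ≤ v_p(a) + n * v_p(c)` for all `n`
forces `v_p(d) ≤ v_p(c)`, i.e. `d ∣ c`.
-/

theorem Nat.dvd_of_forall_pow_dvd_mul_pow {a c d : ℕ} (ha : a ≠ 0)
    (h : ∀ n, d ^ n ∣ a * c ^ n) : d ∣ c := by
  rcases eq_or_ne c 0 with rfl | hc
  · exact dvd_zero d
  have hd : d ≠ 0 := by
    rintro rfl
    simpa [ha, hc] using h 1
  rw [← Nat.factorization_le_iff_dvd hd hc]
  intro p
  have hp := (Nat.factorization_le_iff_dvd (pow_ne_zero _ hd)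
    (mul_ne_zero ha (pow_ne_zero _ hc))).2 (h (a.factorization p + 1)) p
  simp only [Nat.factorization_pow, Nat.factorization_mul ha (pow_ne_zero _ hc),
    Finsupp.coe_add, Finsupp.coe_smul, Pi.add_apply, Pi.smul_apply, smul_eq_mul] at hp
  nlinarith

theorem natCast_mem_pow_ratio_iff {c : ℕ} (hc : c ≠ 0) (d a n : ℕ) :
    (a : ℚ) ∈ {q : ℚ | ∃ m : ℕ, q = (d : ℚ) ^ n * m / (c : ℚ) ^ n} ↔ d ^ n ∣ a * c ^ n := by
  have hcn : ((c : ℚ) ^ n) ≠ 0 := pow_ne_zero _ (Nat.cast_ne_zero.2 hc)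
  simp only [Set.mem_ofPred_eq, eq_div_iff hcn, dvd_iff_exists_eq_mul_right]
  exact exists_congr fun m => by norm_cast

theorem iInter_pow_ratio_eq_zero_iff_general (c d : ℕ) (hc : 2 ≤ c) :
    (⋂ n : ℕ, {q : ℚ | ∃ m : ℕ, q = (d : ℚ) ^ n * m / (c : ℚ) ^ n}) = {0} ↔
      ¬ (d ∣ c) := by
  have hc0 : c ≠ 0 := by omega
  constructor
  · rintro h ⟨k, hk⟩
    have hone : ((1 : ℕ) : ℚ) ∈ ⋂ n : ℕ, {q : ℚ | ∃ m : ℕ, q = (d : ℚ) ^ n * m / (c : ℚ) ^ n} :=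
      Set.mem_iInter.2 fun n => (natCast_mem_pow_ratio_iff hc0 d 1 n).2 ⟨k ^ n, by rw [hk]; ring⟩
    rw [h] at hone
    simp at hone
  · intro hndvd
    ext q
    simp only [Set.mem_iInter, Set.mem_singleton_iff]
    constructor
    · intro hq
      obtain ⟨a, rfl⟩ : ∃ a : ℕ, q = a := by simpa using hq 0
      by_contra ha
      exact hndvd <| Nat.dvd_of_forall_pow_dvd_mul_pow (by exact_mod_cast ha)
        fun n => (natCast_mem_pow_ratio_iff hc0 d a n).1 (hq n)
    · rintro rfl n
      exact ⟨0, by simp⟩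

theorem iInter_pow_ratio_eq_zero_iff (c d : ℕ) (hc : 2 ≤ c) (hd : 2 ≤ d) :
    (⋂ n : ℕ, {q : ℚ | ∃ m : ℕ, q = (d : ℚ) ^ n * m / (c : ℚ) ^ n}) = {0} ↔
      ¬ (d ∣ c) :=
  iInter_pow_ratio_eq_zero_iff_general c d hc
end

section
/- If A ∈ Mat_d(ℤ) is a dilation matrix, i.e. every complex eigenvalue λ of A satisfies |λ| > 1, then the intersection over all n ∈ ℕ of the subgroups A^n(ℤ^d) of ℤ^d equals {0}. -/
/-!
No eigenvalue of `A` vanishes, so `A` is invertible over `ℂ` and every eigenvalue of `A⁻¹`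
lies in the open unit disc; by Gelfand's formula `A⁻ⁿ → 0`. If `v = Aⁿ wₙ` for every `n`, then
the integer vectors `wₙ = A⁻ⁿ v` tend to `0`, so some `wₙ` vanishes and `v = 0`.
-/

open Filter Topology Matrix

theorem tendsto_pow_nhds_zero_of_spectralRadius_lt_one {A : Type*} [NormedRing A]
    [NormedAlgebra ℂ A] [CompleteSpace A] {a : A} (ha : spectralRadius ℂ a < 1) :
    Tendsto (a ^ ·) atTop (𝓝 0) := by
  obtain ⟨t, hat, ht1⟩ := ENNReal.lt_iff_exists_nnreal_btwn.1 ha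
  have hgelfand := spectrum.pow_nnnorm_pow_one_div_tendsto_nhds_spectralRadius a
  have hle : ∀ᶠ n : ℕ in atTop, ‖a ^ n‖ ≤ (t : ℝ) ^ n := by
    filter_upwards [hgelfand.eventually_lt_const hat, eventually_gt_atTop 0] with n hn hn0
    rw [one_div, ENNReal.rpow_inv_lt_iff (by positivity), ENNReal.rpow_natCast] at hn
    have : ‖a ^ n‖₊ ≤ t ^ n := by exact_mod_cast hn.le
    exact_mod_cast this
  exact squeeze_zero_norm' hle (tendsto_pow_atTop_nhds_zero_of_lt_one t.2 (by exact_mod_cast ht1))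

section Spectrum

variable {𝕜 A : Type*} [NormedField 𝕜] [Ring A] [Algebra 𝕜 A]

theorem spectrum.isUnit_of_forall_one_lt_norm {a : A}
    (ha : ∀ z ∈ spectrum 𝕜 a, 1 < ‖z‖) : IsUnit a := by
  by_contra h
  have := ha 0 (spectrum.zero_mem_iff 𝕜 |>.2 h)
  norm_num at this

theorem spectrum.norm_lt_one_of_mem_inv {u : Aˣ}
    (hu : ∀ z ∈ spectrum 𝕜 (u : A), 1 < ‖z‖) : ∀ z ∈ spectrum 𝕜 (↑u⁻¹ : A), ‖z‖ < 1 := by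
  intro z hz
  rw [← spectrum.map_inv, Set.mem_inv] at hz
  have := hu _ hz
  rw [norm_inv, one_lt_inv_iff₀] at this
  exact this.2

end Spectrum

theorem Matrix.tendsto_pow_nhds_zero_of_forall_norm_lt_one {n : Type*} [Fintype n]
    [DecidableEq n] {M : Matrix n n ℂ} (hM : ∀ z ∈ spectrum ℂ M, ‖z‖ < 1) :
    Tendsto (M ^ ·) atTop (𝓝 0) := by
  cases isEmpty_or_nonempty n
  · simpa only [Subsingleton.elim _ (0 : Matrix n n ℂ)] using tendsto_const_nhds
  -- any norm will do; this one induces the usual topology on matrices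
  let := Matrix.linftyOpNormedRing (n := n) (α := ℂ)
  let := Matrix.linftyOpNormedAlgebra (n := n) (R := ℂ) (α := ℂ)
  have : CompleteSpace (Matrix n n ℂ) := FiniteDimensional.complete ℂ _
  refine tendsto_pow_nhds_zero_of_spectralRadius_lt_one ?_
  exact_mod_cast spectrum.spectralRadius_lt_of_forall_lt M (r := 1) fun z hz => by
    exact_mod_cast hM z hz

theorem Matrix.intCast_comp_mulVec {m n R : Type*} [Fintype n] [Ring R] (M : Matrix m n ℤ)
    (w : n → ℤ) : ((↑) ∘ (M *ᵥ w) : m → R) = M.map (↑) *ᵥ ((↑) ∘ w) :=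
  funext (RingHom.map_mulVec (Int.castRingHom R) M w)

theorem eq_zero_of_norm_intCast_comp_lt_one {ι : Type*} [Fintype ι] {w : ι → ℤ}
    (hw : ‖((↑) ∘ w : ι → ℂ)‖ < 1) : w = 0 := by
  funext i
  have := (norm_le_pi_norm _ i).trans_lt hw
  rwa [Function.comp_apply, Complex.norm_intCast, ← Int.cast_abs, ← Int.cast_one, Int.cast_lt,
    Int.abs_lt_one_iff] at this

theorem iInter_image_pow_dilation_eq_zero_general (d : ℕ)
    (A : Matrix (Fin d) (Fin d) ℤ)
    (hA : ∀ μ : ℂ, (A.map (Int.cast : ℤ → ℂ)).charpoly.IsRoot μ →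
      1 < ‖μ‖) :
    (⋂ n : ℕ, Set.range (fun v : Fin d → ℤ => (A ^ n).mulVec v)) = {0} := by
  have hB : ∀ z ∈ spectrum ℂ (A.map (Int.cast : ℤ → ℂ)), 1 < ‖z‖ :=
    fun z hz => hA z (mem_spectrum_iff_isRoot_charpoly.1 hz)
  obtain ⟨B, hAB⟩ := spectrum.isUnit_of_forall_one_lt_norm hB
  rw [← hAB] at hB
  set C : Matrix (Fin d) (Fin d) ℂ := ↑B⁻¹
  have hinv (n : ℕ) (w : Fin d → ℤ) :
      C ^ n *ᵥ (Int.cast ∘ (A ^ n *ᵥ w)) = Int.cast ∘ w := by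
    have hpow : (A ^ n).map (Int.cast : ℤ → ℂ) = ↑B ^ n := by
      rw [hAB]; exact A.map_pow (Int.castRingHom ℂ) n
    rw [intCast_comp_mulVec, hpow, mulVec_mulVec, ← Units.val_pow_eq_pow_val,
      ← Units.val_pow_eq_pow_val, ← Units.val_mul, inv_pow, inv_mul_cancel, Units.val_one,
      one_mulVec]
  refine Set.eq_singleton_iff_unique_mem.2
    ⟨Set.mem_iInter.2 fun n => ⟨0, mulVec_zero _⟩, fun v hv => ?_⟩
  have hlim : Tendsto (fun n => C ^ n *ᵥ (Int.cast ∘ v : Fin d → ℂ)) atTop (𝓝 0) :=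
    ((continuous_id.matrix_mulVec continuous_const).tendsto' 0 0 (zero_mulVec _)).comp
      (tendsto_pow_nhds_zero_of_forall_norm_lt_one (spectrum.norm_lt_one_of_mem_inv hB))
  obtain ⟨n, hn⟩ := (hlim.eventually (Metric.ball_mem_nhds 0 one_pos)).exists
  obtain ⟨w, rfl⟩ : ∃ w, A ^ n *ᵥ w = v := Set.mem_iInter.1 hv n
  rw [dist_zero_right, hinv] at hn
  rw [eq_zero_of_norm_intCast_comp_lt_one hn, mulVec_zero]

theorem iInter_image_pow_dilation_eq_zero (d : ℕ) (hd : 1 ≤ d)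
    (A : Matrix (Fin d) (Fin d) ℤ)
    (hA : ∀ μ : ℂ, (A.map (Int.cast : ℤ → ℂ)).charpoly.IsRoot μ →
      1 < ‖μ‖) :
    (⋂ n : ℕ, Set.range (fun v : Fin d → ℤ => (A ^ n).mulVec v)) = {0} :=
  iInter_image_pow_dilation_eq_zero_general d A hA
end
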